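/- arXiv:2506.01168 — 6 statements merged into one kernel-verified Lean document; each statement's English description precedes it below -/
import Mathlib

section
/- Let p(κ,ρ) = 8κ(κ+1)ρ⁷ - (23κ² + 18κ + 7)ρ⁶ + 2(5κ² - 14κ - 7)ρ⁵ + (31κ² + 50κ + 15)ρ⁴ - 4(11κ² - 4κ - 11)ρ³ + (23κ² - 30κ + 23)ρ² - 2(κ-1)(3κ+1)ρ + (κ-1)². For every κ ≥ 9 + 4√5, p(κ, ρ) < 0 at ρ = 1 - √(2/κ). -/
/-! Put `t = √(2/κ)`. On the curve `κ t² = 2` the polynomial `p κ (1 - t)` collapses to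
`t² q(t)` with the κ-free quartic `q(t) = -28 + 80t - 84t² + 40t³ - 7t⁴`, and
`q(1 - u) = 1 - 4u - 6u² - 12u³ - 7u⁴` is negative once `u ≥ 1/5`. Hence the claim holds as soon
as `t ≤ 4/5`, i.e. for all `κ ≥ 25/8`, well below `9 + 4√5`. -/

noncomputable def p (κ ρ : ℝ) : ℝ :=
  8 * κ * (κ + 1) * ρ^7 - (23 * κ^2 + 18 * κ + 7) * ρ^6
    + 2 * (5 * κ^2 - 14 * κ - 7) * ρ^5 + (31 * κ^2 + 50 * κ + 15) * ρ^4
    - 4 * (11 * κ^2 - 4 * κ - 11) * ρ^3 + (23 * κ^2 - 30 * κ + 23) * ρ^2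
    - 2 * (κ - 1) * (3 * κ + 1) * ρ + (κ - 1)^2

lemma p_one_sub_of_mul_sq_eq_two {κ t : ℝ} (h : κ * t ^ 2 = 2) :
    p κ (1 - t) = t ^ 2 * (-28 + 80 * t - 84 * t ^ 2 + 40 * t ^ 3 - 7 * t ^ 4) := by
  unfold p
  linear_combination (t ^ 2 * (16 - 40 * t + 33 * t ^ 2 - 8 * t ^ 3) * κ
    + (-32 + 64 * t - 14 * t ^ 2 - 48 * t ^ 3 + 38 * t ^ 4 - 8 * t ^ 5)) * h

lemma quartic_neg_of_le {t : ℝ} (ht : t ≤ 4 / 5) :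
    -28 + 80 * t - 84 * t ^ 2 + 40 * t ^ 3 - 7 * t ^ 4 < 0 := by
  obtain ⟨u, hu, rfl⟩ : ∃ u, 1 / 5 ≤ u ∧ t = 1 - u := ⟨1 - t, by linarith, by ring⟩
  have hu0 : 0 ≤ u := by linarith
  nlinarith [pow_nonneg hu0 3, pow_nonneg hu0 4]

lemma p_one_sub_sqrt_neg {κ : ℝ} (hκ : 25 / 8 ≤ κ) : p κ (1 - Real.sqrt (2 / κ)) < 0 := by
  have hκ0 : 0 < κ := by linarith
  set t := Real.sqrt (2 / κ)
  have ht_sq : t ^ 2 = 2 / κ := Real.sq_sqrt (by positivity)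
  have ht_pos : 0 < t := Real.sqrt_pos.mpr (by positivity)
  have ht_le : t ≤ 4 / 5 := by
    rw [Real.sqrt_le_left (by norm_num), div_le_iff₀ hκ0]
    linarith
  rw [p_one_sub_of_mul_sq_eq_two (by rw [ht_sq]; field_simp)]
  exact mul_neg_of_pos_of_neg (by positivity) (quartic_neg_of_le ht_le)

theorem stmt_4 (κ : ℝ) (hκ : κ ≥ 9 + 4 * Real.sqrt 5) :
    p κ (1 - Real.sqrt (2 / κ)) < 0 :=
  p_one_sub_sqrt_neg (by linarith [Real.sqrt_nonneg 5])
end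

section
/- A monic real quadratic z² + a₁z + a₀ has both complex roots of modulus at most ρ > 0 if and only if ρ² + a₁ρ + a₀ ≥ 0, ρ² - a₁ρ + a₀ ≥ 0, and |a₀| ≤ ρ². -/
/-!
If the quadratic has a nonreal root `z`, its roots are `z` and `conj z`, so both have modulus
`√a₀`. If the roots `t, s` are real, `ρ² ± a₁ρ + a₀ = (ρ ∓ t)(ρ ∓ s)` is nonnegative exactly when
`±ρ` is not strictly between them, and `a₀ = t s` then rules out that both lie beyond `ρ` (or
both below `-ρ`). Conversely, a negative value at `ρ` produces a real root
`(-a₁ + √(a₁² - 4a₀))/2 > ρ`, and `|a₀|` is the product of the moduli of the two roots.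
The substitution `z ↦ -z`, `a₁ ↦ -a₁` exchanges the two sign conditions.
-/

open ComplexConjugate

def RootsNormLE (a₀ a₁ ρ : ℝ) : Prop :=
  ∀ z : ℂ, z ^ 2 + (a₁ : ℂ) * z + (a₀ : ℂ) = 0 → ‖z‖ ≤ ρ

section Real

variable {a₀ a₁ ρ : ℝ}

theorem exists_root_gt_of_eval_neg (h : ρ ^ 2 + a₁ * ρ + a₀ < 0) :
    ∃ t : ℝ, ρ < t ∧ t ^ 2 + a₁ * t + a₀ = 0 := by
  have hD : 0 ≤ a₁ ^ 2 - 4 * a₀ := by nlinarith [sq_nonneg (2 * ρ + a₁)]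
  have hρ : 2 * ρ + a₁ < √(a₁ ^ 2 - 4 * a₀) := Real.lt_sqrt_of_sq_lt (by linarith)
  refine ⟨(-a₁ + √(a₁ ^ 2 - 4 * a₀)) / 2, by linarith, ?_⟩
  linear_combination Real.sq_sqrt hD / 4

theorem le_of_root (hρ : 0 < ρ) (hχ : 0 ≤ ρ ^ 2 + a₁ * ρ + a₀) (ha₀ : a₀ ≤ ρ ^ 2) {t : ℝ}
    (ht : t ^ 2 + a₁ * t + a₀ = 0) : t ≤ ρ := by
  by_contra! htρ
  set s := -a₁ - t
  have hprod : t * s = a₀ := by linear_combination -ht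
  have hχ_eq : (t - ρ) * (s - ρ) = ρ ^ 2 + a₁ * ρ + a₀ := by linear_combination -ht
  have hs : 0 ≤ s - ρ := nonneg_of_mul_nonneg_right (hχ_eq ▸ hχ) (by linarith)
  nlinarith [mul_lt_mul_of_pos_right htρ (by linarith : 0 < s)]

end Real

theorem Complex.normSq_eq_of_root_of_conj_ne {a₀ a₁ : ℝ} {z : ℂ}
    (hz : z ^ 2 + (a₁ : ℂ) * z + (a₀ : ℂ) = 0) (hconj : conj z ≠ z) : normSq z = a₀ := by
  have hz' : conj z ^ 2 + (a₁ : ℂ) * conj z + (a₀ : ℂ) = 0 := by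
    simpa using congrArg conj hz
  have hsum : conj z + z = -(a₁ : ℂ) := by
    have : (conj z - z) * (conj z + z + a₁) = 0 := by linear_combination hz' - hz
    rcases mul_eq_zero.mp this with h | h
    · exact absurd (sub_eq_zero.mp h) hconj
    · linear_combination h
  have : (normSq z : ℂ) = a₀ := by
    rw [← mul_conj]
    linear_combination z * hsum - hz
  exact_mod_cast this

namespace RootsNormLE

variable {a₀ a₁ ρ : ℝ}

theorem neg (h : RootsNormLE a₀ a₁ ρ) : RootsNormLE a₀ (-a₁) ρ := fun z hz => by
  simpa using h (-z) (by push_cast at hz; linear_combination hz)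

theorem eval_nonneg (h : RootsNormLE a₀ a₁ ρ) : 0 ≤ ρ ^ 2 + a₁ * ρ + a₀ := by
  by_contra! hneg
  obtain ⟨t, hρt, ht⟩ := exists_root_gt_of_eval_neg hneg
  have := h t (by exact_mod_cast ht)
  rw [Complex.norm_real, Real.norm_eq_abs] at this
  linarith [le_abs_self t]

theorem abs_le_sq (h : RootsNormLE a₀ a₁ ρ) : |a₀| ≤ ρ ^ 2 := by
  obtain ⟨u, hu⟩ := exists_quadratic_eq_zero one_ne_zero
    (IsAlgClosed.exists_eq_mul_self (discrim 1 (a₁ : ℂ) a₀))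
  have hprod : (a₀ : ℂ) = u * (-a₁ - u) := by linear_combination hu
  have hu_le := h u (by linear_combination hu)
  have hv_le := h (-a₁ - u) (by linear_combination hu)
  calc |a₀| = ‖u‖ * ‖-(a₁ : ℂ) - u‖ := by
        rw [← Real.norm_eq_abs, ← Complex.norm_real, hprod, norm_mul]
    _ ≤ ρ * ρ := mul_le_mul hu_le hv_le (norm_nonneg _) ((norm_nonneg u).trans hu_le)
    _ = ρ ^ 2 := (sq ρ).symm

theorem of_eval_nonneg (hρ : 0 < ρ) (heval : 0 ≤ ρ ^ 2 + a₁ * ρ + a₀)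
    (heval_neg : 0 ≤ ρ ^ 2 - a₁ * ρ + a₀) (ha₀ : |a₀| ≤ ρ ^ 2) : RootsNormLE a₀ a₁ ρ := by
  intro z hz
  have ha₀' := abs_le.mp ha₀
  by_cases hreal : conj z = z
  · rw [← Complex.conj_eq_iff_re.mp hreal] at hz ⊢
    have ht : z.re ^ 2 + a₁ * z.re + a₀ = 0 := by exact_mod_cast hz
    rw [Complex.norm_real, Real.norm_eq_abs, abs_le]
    refine ⟨?_, le_of_root hρ heval ha₀'.2 ht⟩
    have := le_of_root (a₁ := -a₁) hρ (by linarith) ha₀'.2 (t := -z.re) (by linear_combination ht)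
    linarith
  · have hsq : ‖z‖ ^ 2 ≤ ρ ^ 2 := by
      rw [Complex.sq_norm, Complex.normSq_eq_of_root_of_conj_ne hz hreal]
      exact ha₀'.2
    exact (pow_le_pow_iff_left₀ (norm_nonneg z) hρ.le two_ne_zero).mp hsq

end RootsNormLE

theorem stmt_9 (a₀ a₁ ρ : ℝ) (hρ : 0 < ρ) :
    (∀ z : ℂ, z^2 + (a₁ : ℂ) * z + (a₀ : ℂ) = 0 → ‖z‖ ≤ ρ) ↔
      (ρ^2 + a₁ * ρ + a₀ ≥ 0 ∧ ρ^2 - a₁ * ρ + a₀ ≥ 0 ∧ |a₀| ≤ ρ^2) := by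
  change RootsNormLE a₀ a₁ ρ ↔ _
  refine ⟨fun h => ⟨h.eval_nonneg, ?_, h.abs_le_sq⟩,
    fun ⟨heval, heval_neg, ha₀⟩ => RootsNormLE.of_eval_nonneg hρ heval heval_neg ha₀⟩
  linarith [h.neg.eval_nonneg]
end

section
/- Let 0 < m ≤ L, κ = L/m, ρ ∈ (0,1), and define α = (1-ρ)²/m, β = (ρ/(κ-1))(1 - κ(1-3ρ)/(1+ρ)), η = (ρ/(κ-1))((1+ρ)/(1-ρ)² - κ/(1+ρ)) (requiring κ > 1). Let g(z) = -α((1+η)z - η)/((z-1)(z-β)). Then L·g(-ρ) = 1, m·g(ρ) = 1, and g'(ρ) = 0. -/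
/-!
Writing `L = κ m`, the three claims become polynomial identities in `κ` and `ρ` once the
denominators of `β` and `η` are cleared: the two interpolation conditions `m g(ρ) = 1`,
`L g(-ρ) = 1` are linear in `η` and `β`, and `g'(ρ) = 0` is the vanishing of the numerator of
the quotient rule.
-/

noncomputable section

def momentumBeta (κ ρ : ℝ) : ℝ := ρ / (κ - 1) * (1 - κ * (1 - 3 * ρ) / (1 + ρ))

def momentumEta (κ ρ : ℝ) : ℝ := ρ / (κ - 1) * ((1 + ρ) / (1 - ρ) ^ 2 - κ / (1 + ρ))

end

theorem deriv_div_eq_zero_of_hasDerivAt {u v : ℝ → ℝ} {u' v' x : ℝ} (hu : HasDerivAt u u' x)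
    (hv : HasDerivAt v v' x) (hx : v x ≠ 0) (h : u' * v x = u x * v') :
    deriv (fun z => u z / v z) x = 0 :=
  (hu.div hv hx).deriv.trans (by rw [h, sub_self, zero_div])

section

variable {κ ρ : ℝ} (hκ : κ ≠ 1) (hρ : ρ ≠ 1) (hρ' : 1 + ρ ≠ 0)
include hκ hρ hρ'

theorem one_sub_mul_sub_momentumEta :
    (1 - ρ) * (ρ - momentumEta κ ρ * (1 - ρ)) = ρ - momentumBeta κ ρ := by
  have : κ - 1 ≠ 0 := sub_ne_zero.mpr hκ
  have : 1 - ρ ≠ 0 := sub_ne_zero.mpr hρ.symm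
  unfold momentumEta momentumBeta
  field_simp
  ring

theorem mul_sq_mul_add_momentumEta :
    κ * (1 - ρ) ^ 2 * (ρ + momentumEta κ ρ * (1 + ρ)) = (1 + ρ) * (ρ + momentumBeta κ ρ) := by
  have : κ - 1 ≠ 0 := sub_ne_zero.mpr hκ
  have : 1 - ρ ≠ 0 := sub_ne_zero.mpr hρ.symm
  unfold momentumEta momentumBeta
  field_simp
  ring

theorem momentumEta_stationary :
    (1 + momentumEta κ ρ) * ((ρ - 1) * (ρ - momentumBeta κ ρ)) =
      ((1 + momentumEta κ ρ) * ρ - momentumEta κ ρ) * ((ρ - momentumBeta κ ρ) + (ρ - 1)) := by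
  have : κ - 1 ≠ 0 := sub_ne_zero.mpr hκ
  have : 1 - ρ ≠ 0 := sub_ne_zero.mpr hρ.symm
  unfold momentumEta momentumBeta
  field_simp
  ring

end

theorem stmt_10 (m L ρ : ℝ) (hm : 0 < m) (hmL : m < L) (hρ0 : 0 < ρ) (hρ1 : ρ < 1)
    (κ α β η : ℝ) (hκ : κ = L / m)
    (hα : α = (1 - ρ)^2 / m)
    (hβ : β = (ρ / (κ - 1)) * (1 - κ * (1 - 3 * ρ) / (1 + ρ)))
    (hη : η = (ρ / (κ - 1)) * ((1 + ρ) / (1 - ρ)^2 - κ / (1 + ρ)))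
    (g : ℝ → ℝ)
    (hg : g = fun z => -α * ((1 + η) * z - η) / ((z - 1) * (z - β)))
    (hβρ : ρ ≠ β) (hβρ' : -ρ ≠ β) :
    L * g (-ρ) = 1 ∧ m * g ρ = 1 ∧ deriv g ρ = 0 := by
  have hm0 : m ≠ 0 := hm.ne'
  have hL : L = κ * m := by rw [hκ, div_mul_cancel₀ L hm0]
  have hκ1 : κ ≠ 1 := by
    rintro rfl
    exact hmL.ne' (by rw [hL, one_mul])
  have hρ : ρ ≠ 1 := hρ1.ne
  have hρ' : 1 + ρ ≠ 0 := by positivity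
  have hβ' : momentumBeta κ ρ = β := hβ.symm
  have hη' : momentumEta κ ρ = η := hη.symm
  have hA := one_sub_mul_sub_momentumEta hκ1 hρ hρ'
  have hB := mul_sq_mul_add_momentumEta hκ1 hρ hρ'
  have hC := momentumEta_stationary hκ1 hρ hρ'
  rw [hβ', hη'] at hA hB hC
  have hden : (ρ - 1) * (ρ - β) ≠ 0 := mul_ne_zero (sub_ne_zero.mpr hρ) (sub_ne_zero.mpr hβρ)
  have hden' : (-ρ - 1) * (-ρ - β) ≠ 0 :=
    mul_ne_zero (by linarith) (sub_ne_zero.mpr hβρ')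
  subst hg hL
  refine ⟨?_, ?_, ?_⟩
  · rw [← mul_div_assoc, div_eq_one_iff_eq hden', hα]
    field_simp
    linear_combination hB
  · rw [← mul_div_assoc, div_eq_one_iff_eq hden, hα]
    field_simp
    linear_combination (ρ - 1) * hA
  · refine deriv_div_eq_zero_of_hasDerivAt
      ((((hasDerivAt_id ρ).const_mul (1 + η)).sub_const η).const_mul (-α))
      (((hasDerivAt_id ρ).sub_const 1).mul ((hasDerivAt_id ρ).sub_const β)) hden ?_
    simp only [id, mul_one, one_mul]
    linear_combination (-α) * hC
end

section
/- Let 0 < m ≤ L, κ = L/m > 1, and suppose (√κ - 1)/(√κ + 1) ≤ ρ ≤ (κ - 1)/(κ + 1) with 0 < ρ < 1. With α = (1-ρ)²/m, β = (ρ/(κ-1))(1 - κ(1-3ρ)/(1+ρ)), η = (ρ/(κ-1))((1+ρ)/(1-ρ)² - κ/(1+ρ)), the four Jury inequalities (1-ρ)(β-ρ) + α(ηρ - η + ρ)q ≥ 0, (1+ρ)(β+ρ) - α(ηρ + η + ρ)q ≥ 0, ρ² + β - αηq ≥ 0, and ρ² - β + αηq ≥ 0 hold for all q ∈ [m, L].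 -/
/-!
Each Jury expression is affine in `q` and, after clearing denominators (with `L = κ m`),
factors as a product of manifestly nonnegative terms: `q - m`, `κ m - q`, and the two
quantities `κ (1 - ρ) - (1 + ρ)` and `(1 + ρ)² - κ (1 - ρ)²`, which are nonnegative exactly
by the upper and the lower bound on `ρ`.
-/

noncomputable section

def tunedα (m ρ : ℝ) : ℝ := (1 - ρ) ^ 2 / m

def tunedβ (κ ρ : ℝ) : ℝ := (ρ / (κ - 1)) * (1 - κ * (1 - 3 * ρ) / (1 + ρ))

def tunedη (κ ρ : ℝ) : ℝ := (ρ / (κ - 1)) * ((1 + ρ) / (1 - ρ) ^ 2 - κ / (1 + ρ))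

end

section RateBounds

variable {κ ρ : ℝ}

theorem one_add_le_mul_one_sub_of_le_div (hκ : 0 < κ + 1) (h : ρ ≤ (κ - 1) / (κ + 1)) :
    1 + ρ ≤ κ * (1 - ρ) := by
  rw [le_div_iff₀ hκ] at h
  linarith

theorem mul_sq_one_sub_le_sq_one_add_of_div_le (hκ : 0 ≤ κ) (hρ : ρ ≤ 1)
    (h : (√κ - 1) / (√κ + 1) ≤ ρ) : κ * (1 - ρ) ^ 2 ≤ (1 + ρ) ^ 2 := by
  rw [div_le_iff₀ (by positivity)] at h
  have hsqrt : √κ * (1 - ρ) ≤ 1 + ρ := by linarith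
  calc κ * (1 - ρ) ^ 2 = (√κ * (1 - ρ)) ^ 2 := by rw [mul_pow, Real.sq_sqrt hκ]
    _ ≤ (1 + ρ) ^ 2 :=
      pow_le_pow_left₀ (mul_nonneg (Real.sqrt_nonneg κ) (by linarith)) hsqrt 2

end RateBounds

section JuryInequalities

variable {m κ ρ q : ℝ}

theorem jury_first_nonneg (hm : 0 < m) (hκ : 1 < κ) (hρ0 : 0 ≤ ρ) (hρ1 : ρ < 1)
    (hQ : 1 + ρ ≤ κ * (1 - ρ)) (hq : m ≤ q) :
    0 ≤ (1 - ρ) * (tunedβ κ ρ - ρ) + tunedα m ρ * (tunedη κ ρ * ρ - tunedη κ ρ + ρ) * q := by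
  have hκ' : 0 < κ - 1 := by linarith
  have hρ' : 0 < 1 - ρ := by linarith
  have hfactor : (1 - ρ) * (tunedβ κ ρ - ρ) +
      tunedα m ρ * (tunedη κ ρ * ρ - tunedη κ ρ + ρ) * q =
      2 * ρ * (1 - ρ) * (κ * (1 - ρ) - (1 + ρ)) * (q - m) / (m * (κ - 1) * (1 + ρ)) := by
    unfold tunedα tunedβ tunedη
    field_simp
    ring
  have hQ' : 0 ≤ κ * (1 - ρ) - (1 + ρ) := sub_nonneg.2 hQ
  have hq' : 0 ≤ q - m := sub_nonneg.2 hq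
  rw [hfactor]
  positivity

theorem jury_second_nonneg (hm : 0 < m) (hκ : 1 < κ) (hρ0 : 0 ≤ ρ) (hρ1 : ρ < 1)
    (hq : q ≤ κ * m) :
    0 ≤ (1 + ρ) * (tunedβ κ ρ + ρ) - tunedα m ρ * (tunedη κ ρ * ρ + tunedη κ ρ + ρ) * q := by
  have hκ' : 0 < κ - 1 := by linarith
  have hρ' : 1 - ρ ≠ 0 := by linarith
  have hfactor : (1 + ρ) * (tunedβ κ ρ + ρ) -
      tunedα m ρ * (tunedη κ ρ * ρ + tunedη κ ρ + ρ) * q =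
      4 * ρ ^ 2 * (κ * m - q) / (m * (κ - 1)) := by
    unfold tunedα tunedβ tunedη
    field_simp
    ring
  have hq' : 0 ≤ κ * m - q := sub_nonneg.2 hq
  rw [hfactor]
  positivity

theorem jury_third_nonneg (hm : 0 < m) (hκ : 1 < κ) (hρ0 : 0 ≤ ρ) (hρ1 : ρ < 1)
    (hQ : 1 + ρ ≤ κ * (1 - ρ)) (hP : κ * (1 - ρ) ^ 2 ≤ (1 + ρ) ^ 2) (hq : q ≤ κ * m) :
    0 ≤ ρ ^ 2 + tunedβ κ ρ - tunedα m ρ * tunedη κ ρ * q := by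
  have hκ' : 0 < κ - 1 := by linarith
  have hρ' : 0 < 1 - ρ := by linarith
  have hfactor : ρ ^ 2 + tunedβ κ ρ - tunedα m ρ * tunedη κ ρ * q =
      ρ * ((1 - ρ) * (κ - 1) * (κ * (1 - ρ) - (1 + ρ)) * m +
        ((1 + ρ) ^ 2 - κ * (1 - ρ) ^ 2) * (κ * m - q)) / (m * (κ - 1) * (1 + ρ)) := by
    unfold tunedα tunedβ tunedη
    field_simp
    ring
  have hQ' : 0 ≤ κ * (1 - ρ) - (1 + ρ) := sub_nonneg.2 hQ
  have hP' : 0 ≤ (1 + ρ) ^ 2 - κ * (1 - ρ) ^ 2 := sub_nonneg.2 hP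
  have hq' : 0 ≤ κ * m - q := sub_nonneg.2 hq
  rw [hfactor]
  positivity

theorem jury_fourth_nonneg (hm : 0 < m) (hκ : 1 < κ) (hρ0 : 0 ≤ ρ) (hρ1 : ρ < 1)
    (hP : κ * (1 - ρ) ^ 2 ≤ (1 + ρ) ^ 2) (hq : m ≤ q) :
    0 ≤ ρ ^ 2 - tunedβ κ ρ + tunedα m ρ * tunedη κ ρ * q := by
  have hκ' : 0 < κ - 1 := by linarith
  have hρ' : 1 - ρ ≠ 0 := by linarith
  have hfactor : ρ ^ 2 - tunedβ κ ρ + tunedα m ρ * tunedη κ ρ * q =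
      ρ * ((1 + ρ) ^ 2 - κ * (1 - ρ) ^ 2) * (q - m) / (m * (κ - 1) * (1 + ρ)) := by
    unfold tunedα tunedβ tunedη
    field_simp
    ring
  have hP' : 0 ≤ (1 + ρ) ^ 2 - κ * (1 - ρ) ^ 2 := sub_nonneg.2 hP
  have hq' : 0 ≤ q - m := sub_nonneg.2 hq
  rw [hfactor]
  positivity

end JuryInequalities

theorem stmt_12_general (m L κ ρ α β η : ℝ) (hm : 0 < m)
    (hκ : κ = L / m) (hκ1 : 1 < κ)
    (hρlo : (Real.sqrt κ - 1) / (Real.sqrt κ + 1) ≤ ρ)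
    (hρhi : ρ ≤ (κ - 1) / (κ + 1)) (hρ0 : 0 < ρ) (hρ1 : ρ < 1)
    (hα : α = (1 - ρ)^2 / m)
    (hβ : β = (ρ / (κ - 1)) * (1 - κ * (1 - 3 * ρ) / (1 + ρ)))
    (hη : η = (ρ / (κ - 1)) * ((1 + ρ) / (1 - ρ)^2 - κ / (1 + ρ))) :
    ∀ q ∈ Set.Icc m L,
      (1 - ρ) * (β - ρ) + α * (η * ρ - η + ρ) * q ≥ 0 ∧
      (1 + ρ) * (β + ρ) - α * (η * ρ + η + ρ) * q ≥ 0 ∧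
      ρ^2 + β - α * η * q ≥ 0 ∧
      ρ^2 - β + α * η * q ≥ 0 := by
  rintro q ⟨hmq, hqL⟩
  have hqκ : q ≤ κ * m := by rwa [hκ, div_mul_cancel₀ L hm.ne']
  have hQ := one_add_le_mul_one_sub_of_le_div (by linarith) hρhi
  have hP := mul_sq_one_sub_le_sq_one_add_of_div_le (by linarith) hρ1.le hρlo
  subst hα hβ hη
  exact ⟨jury_first_nonneg hm hκ1 hρ0.le hρ1 hQ hmq,
    jury_second_nonneg hm hκ1 hρ0.le hρ1 hqκ,
    jury_third_nonneg hm hκ1 hρ0.le hρ1 hQ hP hqκ,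
    jury_fourth_nonneg hm hκ1 hρ0.le hρ1 hP hmq⟩

theorem stmt_12 (m L κ ρ α β η : ℝ) (hm : 0 < m) (hmL : m ≤ L)
    (hκ : κ = L / m) (hκ1 : 1 < κ)
    (hρlo : (Real.sqrt κ - 1) / (Real.sqrt κ + 1) ≤ ρ)
    (hρhi : ρ ≤ (κ - 1) / (κ + 1)) (hρ0 : 0 < ρ) (hρ1 : ρ < 1)
    (hα : α = (1 - ρ)^2 / m)
    (hβ : β = (ρ / (κ - 1)) * (1 - κ * (1 - 3 * ρ) / (1 + ρ)))
    (hη : η = (ρ / (κ - 1)) * ((1 + ρ) / (1 - ρ)^2 - κ / (1 + ρ))) :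
    ∀ q ∈ Set.Icc m L,
      (1 - ρ) * (β - ρ) + α * (η * ρ - η + ρ) * q ≥ 0 ∧
      (1 + ρ) * (β + ρ) - α * (η * ρ + η + ρ) * q ≥ 0 ∧
      ρ^2 + β - α * η * q ≥ 0 ∧
      ρ^2 - β + α * η * q ≥ 0 :=
  stmt_12_general m L κ ρ α β η hm hκ hκ1 hρlo hρhi hρ0 hρ1 hα hβ hη
end

section
/- Let 0 < m ≤ L and let A(q) = [[1+β, -β],[1, 0]] + q·[[-α(1+η), αη],[0, 0]] with the C2M parameters α = (1-ρ)²/m, β = (ρ/(κ-1))(1 - κ(1-3ρ)/(1+ρ)), η = (ρ/(κ-1))((1+ρ)/(1-ρ)² - κ/(1+ρ)), where κ = L/m > 1 and (√κ-1)/(√κ+1) ≤ ρ ≤ (κ-1)/(κ+1), 0 < ρ < 1. Then for every q ∈ [m, L], every complex eigenvalue of A(q) has modulus at most ρ. -/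
/-!
With `t = q α` the characteristic polynomial of `A(q)` is `z² - a(t) z + d(t)` with
`a(t) = 1 + β - t (1 + η)` and `d(t) = β - t η`, both affine in `t ∈ [(1-ρ)², κ (1-ρ)²]`.
For a real quadratic, all roots lie in the closed disc of radius `ρ` iff
`d ≤ ρ²` and `ρ |a| ≤ ρ² + d` (Jury's criterion); these conditions cut out a convex set of
coefficient pairs, so it suffices to check them at the two endpoints. The C2M parameters are
tuned so that at `q = m` the polynomial is `(z - ρ)²`, and at `q = L` it has the roots `-ρ` and
`1 - κ (1-ρ)² / (1+ρ)`, which lies in `[-ρ, ρ]` precisely by the two bounds on `ρ`.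
-/

open Set

theorem Matrix.mem_spectrum_map_fin_two_iff {R K : Type*} [CommRing R] [Field K] (f : R →+* K)
    (M : Matrix (Fin 2) (Fin 2) R) (μ : K) :
    μ ∈ spectrum K (M.map f) ↔ μ ^ 2 - f M.trace * μ + f M.det = 0 := by
  rw [Matrix.mem_spectrum_iff_isRoot_charpoly, Matrix.charpoly_fin_two, Polynomial.IsRoot.def]
  simp [Matrix.trace_fin_two, Matrix.det_fin_two]

/-- Jury's stability conditions for `z ^ 2 - a * z + d` and the closed disc of radius `ρ`. -/
def JuryCondition (ρ a d : ℝ) : Prop := d ≤ ρ ^ 2 ∧ ρ * |a| ≤ ρ ^ 2 + d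

theorem JuryCondition.norm_le {ρ a d : ℝ} (hρ : 0 < ρ) (h : JuryCondition ρ a d) {μ : ℂ}
    (hμ : μ ^ 2 - a * μ + d = 0) : ‖μ‖ ≤ ρ := by
  obtain ⟨hd, ha⟩ := h
  have hre := congrArg Complex.re hμ
  have him := congrArg Complex.im hμ
  simp only [sq, Complex.sub_re, Complex.add_re, Complex.mul_re, Complex.ofReal_re,
    Complex.ofReal_im, Complex.sub_im, Complex.add_im, Complex.mul_im, Complex.zero_re,
    Complex.zero_im] at hre him
  rcases mul_eq_zero.1 (by linear_combination him : μ.im * (2 * μ.re - a) = 0) with hy | hx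
  · -- a real root: the quadratic is nonnegative at `±ρ` and its vertex `a / 2` lies in `[-ρ, ρ]`
    have hvertex : |a| ≤ 2 * ρ := le_of_mul_le_mul_left (by nlinarith) hρ
    obtain ⟨ha₁, ha₂⟩ := abs_le.1 hvertex
    rw [← Complex.re_add_im μ, hy, Complex.ofReal_zero, zero_mul, add_zero, Complex.norm_real,
      Real.norm_eq_abs]
    rw [hy] at hre
    refine abs_le.2 ⟨?_, ?_⟩ <;> by_contra! hc
    · nlinarith [neg_abs_le a,
        mul_pos (show 0 < -ρ - μ.re by linarith) (show 0 < ρ + a - μ.re by linarith)]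
    · nlinarith [le_abs_self a,
        mul_pos (show 0 < μ.re - ρ by linarith) (show 0 < μ.re + ρ - a by linarith)]
  · have hnorm : ‖μ‖ ^ 2 = d := by
      obtain rfl : a = 2 * μ.re := by linarith
      rw [Complex.sq_norm, Complex.normSq_apply]
      linarith
    exact (pow_le_pow_iff_left₀ (norm_nonneg μ) hρ.le two_ne_zero).1 (hnorm ▸ hd)

theorem juryCondition_of_abs_le {ρ r₁ r₂ : ℝ} (hρ : 0 ≤ ρ) (h₁ : |r₁| ≤ ρ) (h₂ : |r₂| ≤ ρ) :
    JuryCondition ρ (r₁ + r₂) (r₁ * r₂) := by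
  obtain ⟨h₁l, h₁u⟩ := abs_le.1 h₁
  obtain ⟨h₂l, h₂u⟩ := abs_le.1 h₂
  refine ⟨?_, ?_⟩
  · calc r₁ * r₂ ≤ |r₁| * |r₂| := by rw [← abs_mul]; exact le_abs_self _
      _ ≤ ρ ^ 2 := by rw [sq]; exact mul_le_mul h₁ h₂ (abs_nonneg _) hρ
  · rw [← abs_of_nonneg hρ, ← abs_mul, abs_of_nonneg hρ]
    exact abs_le.2 ⟨by nlinarith, by nlinarith⟩

theorem JuryCondition.convex_comb {ρ a₀ d₀ a₁ d₁ w₀ w₁ : ℝ} (hρ : 0 ≤ ρ)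
    (h₀ : JuryCondition ρ a₀ d₀) (h₁ : JuryCondition ρ a₁ d₁) (hw₀ : 0 ≤ w₀) (hw₁ : 0 ≤ w₁)
    (hw : w₀ + w₁ = 1) : JuryCondition ρ (w₀ * a₀ + w₁ * a₁) (w₀ * d₀ + w₁ * d₁) := by
  have habs : |w₀ * a₀ + w₁ * a₁| ≤ w₀ * |a₀| + w₁ * |a₁| :=
    calc |w₀ * a₀ + w₁ * a₁| ≤ |w₀ * a₀| + |w₁ * a₁| := abs_add_le _ _
      _ = w₀ * |a₀| + w₁ * |a₁| := by rw [abs_mul, abs_mul, abs_of_nonneg hw₀, abs_of_nonneg hw₁]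
  refine ⟨by nlinarith [h₀.1, h₁.1], ?_⟩
  nlinarith [mul_le_mul_of_nonneg_left habs hρ, h₀.2, h₁.2]

noncomputable def c2mBeta (κ ρ : ℝ) : ℝ := ρ / (κ - 1) * (1 - κ * (1 - 3 * ρ) / (1 + ρ))

noncomputable def c2mEta (κ ρ : ℝ) : ℝ := ρ / (κ - 1) * ((1 + ρ) / (1 - ρ) ^ 2 - κ / (1 + ρ))

/-- The root other than `-ρ` of the characteristic polynomial at `q = L`. -/
noncomputable def c2mRoot (κ ρ : ℝ) : ℝ := 1 - κ * (1 - ρ) ^ 2 / (1 + ρ)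

section C2M

variable {κ ρ : ℝ}

theorem c2m_coeffs_left_endpoint (hκ : κ ≠ 1) (hρ₀ : 0 < ρ) (hρ₁ : ρ < 1) :
    1 + c2mBeta κ ρ - (1 - ρ) ^ 2 * (1 + c2mEta κ ρ) = ρ + ρ ∧
      c2mBeta κ ρ - (1 - ρ) ^ 2 * c2mEta κ ρ = ρ * ρ := by
  have : κ - 1 ≠ 0 := sub_ne_zero.2 hκ
  have : 1 + ρ ≠ 0 := by positivity
  have : 1 - ρ ≠ 0 := by linarith
  constructor <;> (unfold c2mBeta c2mEta; field_simp; ring)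

theorem c2m_coeffs_right_endpoint (hκ : κ ≠ 1) (hρ₀ : 0 < ρ) (hρ₁ : ρ < 1) :
    1 + c2mBeta κ ρ - κ * (1 - ρ) ^ 2 * (1 + c2mEta κ ρ) = -ρ + c2mRoot κ ρ ∧
      c2mBeta κ ρ - κ * (1 - ρ) ^ 2 * c2mEta κ ρ = -ρ * c2mRoot κ ρ := by
  have : κ - 1 ≠ 0 := sub_ne_zero.2 hκ
  have : 1 + ρ ≠ 0 := by positivity
  have : 1 - ρ ≠ 0 := by linarith
  constructor <;> (unfold c2mBeta c2mEta c2mRoot; field_simp; ring)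

theorem abs_c2mRoot_le (hκ : 1 < κ) (hρ₀ : 0 < ρ) (hρ₁ : ρ < 1)
    (hlo : (Real.sqrt κ - 1) / (Real.sqrt κ + 1) ≤ ρ) (hhi : ρ ≤ (κ - 1) / (κ + 1)) :
    |c2mRoot κ ρ| ≤ ρ := by
  have h1ρ : 0 < 1 + ρ := by linarith
  have hupper : 1 + ρ ≤ κ * (1 - ρ) := by
    rw [le_div_iff₀ (by linarith)] at hhi
    linarith
  have hlower : κ * (1 - ρ) ^ 2 ≤ (1 + ρ) ^ 2 := by
    rw [div_le_iff₀ (by positivity)] at hlo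
    calc κ * (1 - ρ) ^ 2 = (Real.sqrt κ * (1 - ρ)) ^ 2 := by
          rw [mul_pow, Real.sq_sqrt (by linarith)]
      _ ≤ (1 + ρ) ^ 2 :=
          pow_le_pow_left₀ (by have := Real.sqrt_nonneg κ; nlinarith) (by linarith) 2
  unfold c2mRoot
  refine abs_le.2 ⟨?_, ?_⟩
  · have : κ * (1 - ρ) ^ 2 / (1 + ρ) ≤ 1 + ρ := by
      rw [div_le_iff₀ h1ρ]; nlinarith
    linarith
  · have : 1 - ρ ≤ κ * (1 - ρ) ^ 2 / (1 + ρ) := by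
      rw [le_div_iff₀ h1ρ]; nlinarith
    linarith

theorem juryCondition_c2m (hκ : 1 < κ) (hρ₀ : 0 < ρ) (hρ₁ : ρ < 1)
    (hlo : (Real.sqrt κ - 1) / (Real.sqrt κ + 1) ≤ ρ) (hhi : ρ ≤ (κ - 1) / (κ + 1)) {t : ℝ}
    (ht : t ∈ Icc ((1 - ρ) ^ 2) (κ * (1 - ρ) ^ 2)) :
    JuryCondition ρ (1 + c2mBeta κ ρ - t * (1 + c2mEta κ ρ)) (c2mBeta κ ρ - t * c2mEta κ ρ) := by
  have hleft := juryCondition_of_abs_le hρ₀.le (abs_of_pos hρ₀).le (abs_of_pos hρ₀).le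
  have hright := juryCondition_of_abs_le hρ₀.le (abs_neg ρ ▸ (abs_of_pos hρ₀).le)
    (abs_c2mRoot_le hκ hρ₀ hρ₁ hlo hhi)
  obtain ⟨hleft_a, hleft_d⟩ := c2m_coeffs_left_endpoint hκ.ne' hρ₀ hρ₁
  obtain ⟨hright_a, hright_d⟩ := c2m_coeffs_right_endpoint hκ.ne' hρ₀ hρ₁
  rw [← hleft_a, ← hleft_d] at hleft
  rw [← hright_a, ← hright_d] at hright
  obtain ⟨w₀, w₁, hw₀, hw₁, hw, rfl⟩ :=
    (Convex.mem_Icc (le_mul_of_one_le_left (sq_nonneg _) hκ.le)).1 ht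
  convert hleft.convex_comb hρ₀.le hright hw₀ hw₁ hw using 1
  · linear_combination -(1 + c2mBeta κ ρ) * hw
  · linear_combination -c2mBeta κ ρ * hw

end C2M

theorem stmt_13_general (m L κ ρ α β η : ℝ) (hm : 0 < m)
    (hκ : κ = L / m) (hκ1 : 1 < κ)
    (hρlo : (Real.sqrt κ - 1) / (Real.sqrt κ + 1) ≤ ρ)
    (hρhi : ρ ≤ (κ - 1) / (κ + 1)) (hρ0 : 0 < ρ) (hρ1 : ρ < 1)
    (hα : α = (1 - ρ)^2 / m)
    (hβ : β = (ρ / (κ - 1)) * (1 - κ * (1 - 3 * ρ) / (1 + ρ)))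
    (hη : η = (ρ / (κ - 1)) * ((1 + ρ) / (1 - ρ)^2 - κ / (1 + ρ))) :
    ∀ q ∈ Set.Icc m L,
      ∀ μ ∈ spectrum ℂ
        ((!![1 + β, -β; 1, 0] + q • !![-α * (1 + η), α * η; 0, 0]).map
          (Complex.ofReal)),
        ‖μ‖ ≤ ρ := by
  intro q hq μ hμ
  set A := !![1 + β, -β; 1, 0] + q • !![-α * (1 + η), α * η; 0, 0] with hA
  have ht : q * α ∈ Icc ((1 - ρ) ^ 2) (κ * (1 - ρ) ^ 2) := by
    have hα₀ : 0 ≤ α := by rw [hα]; positivity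
    have hmα : m * α = (1 - ρ) ^ 2 := by rw [hα]; field_simp
    have hLα : L * α = κ * (1 - ρ) ^ 2 := by rw [hα, hκ]; field_simp
    rw [← hLα, ← hmα]
    exact ⟨mul_le_mul_of_nonneg_right hq.1 hα₀, mul_le_mul_of_nonneg_right hq.2 hα₀⟩
  have hcoeffs : A.trace = 1 + β - q * α * (1 + η) ∧ A.det = β - q * α * η := by
    rw [hA, Matrix.trace_fin_two, Matrix.det_fin_two]
    simp only [Matrix.add_apply, Matrix.smul_apply, Matrix.of_apply, Matrix.cons_val',
      Matrix.cons_val_zero, Matrix.cons_val_one, Matrix.cons_val_fin_one, smul_eq_mul]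
    constructor <;> ring
  have hchar := (Matrix.mem_spectrum_map_fin_two_iff Complex.ofRealHom A μ).1 hμ
  rw [hcoeffs.1, hcoeffs.2] at hchar
  subst hβ hη
  exact (juryCondition_c2m hκ1 hρ0 hρ1 hρlo hρhi ht).norm_le hρ0 hchar

theorem stmt_13 (m L κ ρ α β η : ℝ) (hm : 0 < m) (hmL : m ≤ L)
    (hκ : κ = L / m) (hκ1 : 1 < κ)
    (hρlo : (Real.sqrt κ - 1) / (Real.sqrt κ + 1) ≤ ρ)
    (hρhi : ρ ≤ (κ - 1) / (κ + 1)) (hρ0 : 0 < ρ) (hρ1 : ρ < 1)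
    (hα : α = (1 - ρ)^2 / m)
    (hβ : β = (ρ / (κ - 1)) * (1 - κ * (1 - 3 * ρ) / (1 + ρ)))
    (hη : η = (ρ / (κ - 1)) * ((1 + ρ) / (1 - ρ)^2 - κ / (1 + ρ))) :
    ∀ q ∈ Set.Icc m L,
      ∀ μ ∈ spectrum ℂ
        ((!![1 + β, -β; 1, 0] + q • !![-α * (1 + η), α * η; 0, 0]).map
          (Complex.ofReal)),
        ‖μ‖ ≤ ρ :=
  stmt_13_general m L κ ρ α β η hm hκ hκ1 hρlo hρhi hρ0 hρ1 hα hβ hη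
end

section
/- Suppose κ ≥ 9 + 4√5 and ρ ∈ (0,1) satisfies (√κ-1)/(√κ+1) < ρ ≤ 1 - √(2/κ). If p(κ,ρ) < 0, where p is the polynomial 8κ(κ+1)ρ⁷ - (23κ²+18κ+7)ρ⁶ + 2(5κ²-14κ-7)ρ⁵ + (31κ²+50κ+15)ρ⁴ - 4(11κ²-4κ-11)ρ³ + (23κ²-30κ+23)ρ² - 2(κ-1)(3κ+1)ρ + (κ-1)², then for all x ∈ [-1,1]: -4ρ(κ(1-ρ)² - (1+ρ))x² - 2(1-ρ)(κ(1-ρ)²(1+2ρ) - (1+ρ)²)x - (1+ρ)(κ(1-ρ)²(1-4ρ+ρ²) + 6ρ - 2ρ³) < 0. -/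
/-! A quadratic with negative leading coefficient and negative discriminant is negative
everywhere, and the discriminant of the quadratic in `x` is exactly `4 * p κ ρ`. The leading
coefficient `-4ρ(κ(1-ρ)² - (1+ρ))` is negative because `ρ ≤ 1 - √(2/κ)` gives `κ(1-ρ)² ≥ 2`. -/

theorem quadratic_neg_of_discrim_neg {K : Type*} [Field K] [LinearOrder K] [IsStrictOrderedRing K]
    {a b c : K} (ha : a < 0) (h : discrim a b c < 0) (x : K) :
    a * (x * x) + b * x + c < 0 := by
  have hsq : 0 < 4 * a * (a * (x * x) + b * x + c) := by
    have hid : 4 * a * (a * (x * x) + b * x + c) = (2 * a * x + b) ^ 2 - discrim a b c := by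
      rw [discrim]; ring
    rw [hid]
    linarith [sq_nonneg (2 * a * x + b)]
  exact neg_of_mul_pos_right hsq (by linarith)

theorem Real.le_mul_sq_of_sqrt_div_le {c κ t : ℝ} (hκ : 0 < κ) (h : √(c / κ) ≤ t) :
    c ≤ κ * t ^ 2 := by
  rw [Real.sqrt_le_iff, div_le_iff₀ hκ] at h
  linarith [h.2]

theorem discrim_eq_four_mul_p (κ ρ : ℝ) :
    discrim (-4 * ρ * (κ * (1 - ρ)^2 - (1 + ρ)))
      (-2 * (1 - ρ) * (κ * (1 - ρ)^2 * (1 + 2 * ρ) - (1 + ρ)^2))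
      (-(1 + ρ) * (κ * (1 - ρ)^2 * (1 - 4 * ρ + ρ^2) + 6 * ρ - 2 * ρ^3)) = 4 * p κ ρ := by
  rw [discrim, p]; ring

theorem stmt_14_general (κ ρ : ℝ) (hκ : κ ≥ 9 + 4 * Real.sqrt 5) (hρ0 : 0 < ρ) (hρ1 : ρ < 1)
    (hρhi : ρ ≤ 1 - Real.sqrt (2 / κ))
    (hp : p κ ρ < 0) :
    ∀ x ∈ Set.Icc (-1 : ℝ) 1,
      -4 * ρ * (κ * (1 - ρ)^2 - (1 + ρ)) * x^2
        - 2 * (1 - ρ) * (κ * (1 - ρ)^2 * (1 + 2 * ρ) - (1 + ρ)^2) * x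
        - (1 + ρ) * (κ * (1 - ρ)^2 * (1 - 4 * ρ + ρ^2) + 6 * ρ - 2 * ρ^3) < 0 := by
  intro x _
  have hκ0 : 0 < κ := lt_of_lt_of_le (by positivity) hκ
  have hκρ : 2 ≤ κ * (1 - ρ) ^ 2 := Real.le_mul_sq_of_sqrt_div_le hκ0 (le_sub_comm.mp hρhi)
  have hlead : -4 * ρ * (κ * (1 - ρ)^2 - (1 + ρ)) < 0 := by
    have hgap : 0 < κ * (1 - ρ)^2 - (1 + ρ) := by linarith
    exact mul_neg_of_neg_of_pos (by linarith) hgap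
  have hquad := quadratic_neg_of_discrim_neg hlead
    (by rw [discrim_eq_four_mul_p]; linarith) x
  linear_combination hquad

theorem stmt_14 (κ ρ : ℝ) (hκ : κ ≥ 9 + 4 * Real.sqrt 5) (hρ0 : 0 < ρ) (hρ1 : ρ < 1)
    (hρlo : (Real.sqrt κ - 1) / (Real.sqrt κ + 1) < ρ)
    (hρhi : ρ ≤ 1 - Real.sqrt (2 / κ))
    (hp : p κ ρ < 0) :
    ∀ x ∈ Set.Icc (-1 : ℝ) 1,
      -4 * ρ * (κ * (1 - ρ)^2 - (1 + ρ)) * x^2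
        - 2 * (1 - ρ) * (κ * (1 - ρ)^2 * (1 + 2 * ρ) - (1 + ρ)^2) * x
        - (1 + ρ) * (κ * (1 - ρ)^2 * (1 - 4 * ρ + ρ^2) + 6 * ρ - 2 * ρ^3) < 0 :=
  stmt_14_general κ ρ hκ hρ0 hρ1 hρhi hp
end
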